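/- arXiv:0909.2860 — 2 statements merged into one kernel-verified Lean document; each statement's English description precedes it below -/
import Mathlib

section
/- Let A and B be C*-algebras, let φ : A → M(B) and ψ : B → M(A) be nondegenerate ⋆-homomorphisms, and let φ̄ : M(A) → M(B) and ψ̄ : M(B) → M(A) be ⋆-homomorphisms satisfying φ̄ ∘ ι_A = φ and ψ̄ ∘ ι_B = ψ. Suppose ψ̄(φ(a)) = ι_A(a) for all a ∈ A and φ̄(ψ(b)) = ι_B(b) for all b ∈ B (i.e., φ and ψ are mutually inverse morphisms in the nondegenerate category). Then the range of φ equals the range of ι_B, and there is a ⋆-algebra isomorphism θ : A ≃ B with ι_B ∘ θ = φ, whose inverse θ⁻¹ satisfies ι_A ∘ θ⁻¹ = ψ. In other words, the isomorphisms in the category of C*-algebras with nondegenerate homomorphisms into multiplier algebras as morphisms are exactly the usual ⋆-isomorphisms of C*-algebras. -/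
open scoped MultiplierAlgebra

/-- A ⋆-homomorphism `φ : A → M(B)` is *nondegenerate* if the closed linear span of
`{φ a * ι_B b : a ∈ A, b ∈ B}` equals the range of the canonical embedding
`ι_B : B → M(B)`. -/
def NonUnitalStarAlgHom.NondegenerateIntoMultiplier {A B : Type*}
    [NonUnitalCStarAlgebra A] [NonUnitalCStarAlgebra B]
    (φ : A →⋆ₙₐ[ℂ] 𝓜(ℂ, B)) : Prop :=
  closure ((Submodule.span ℂ
      {x : 𝓜(ℂ, B) | ∃ (a : A) (b : B), x = φ a * (b : 𝓜(ℂ, B))} :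
        Submodule ℂ 𝓜(ℂ, B)) : Set 𝓜(ℂ, B)) =
    Set.range ((↑) : B → 𝓜(ℂ, B))

/-!
Since `ψ` is nondegenerate, `ι_A(A)` is the closed span of the products `ψ b * ι_A a`, and
`φ̄` maps such a product to `ι_B b * φ a`, which lies in the left ideal `ι_B(B)`. As `ι_B` is
isometric its range is closed, so `φ = φ̄ ∘ ι_A` takes values in `ι_B(B)`; symmetrically `ψ` takes
values in `ι_A(A)`. The resulting ⋆-homomorphisms `A → B` and `B → A` are mutually inverse by
`ψ̄ ∘ φ = ι_A`, `φ̄ ∘ ψ = ι_B` and injectivity of `ι_A`, `ι_B`.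
-/

open scoped CStarAlgebra

namespace DoubleCentralizer

variable {A : Type*} [NonUnitalCStarAlgebra A]

theorem norm_coe (a : A) : ‖(a : 𝓜(ℂ, A))‖ = ‖a‖ := by
  rw [← norm_fst, coe_fst, ContinuousLinearMap.opNorm_mul_apply]

theorem isometry_coe : Isometry ((↑) : A → 𝓜(ℂ, A)) :=
  AddMonoidHomClass.isometry_of_norm (coeHom (𝕜 := ℂ) (A := A)) norm_coe

theorem coe_injective : Function.Injective ((↑) : A → 𝓜(ℂ, A)) :=
  isometry_coe.injective

theorem isClosed_range_coe : IsClosed (Set.range ((↑) : A → 𝓜(ℂ, A))) :=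
  isometry_coe.isClosedEmbedding.isClosed_range

theorem snd_apply_mul (m : 𝓜(ℂ, A)) (x a : A) : m.snd (x * a) = x * m.snd a := by
  set d := m.snd (x * a) - x * m.snd a
  have hd : ∀ b : A, d * b = 0 := fun b => by
    rw [sub_mul, m.central, mul_assoc x (m.snd a), m.central, mul_assoc, sub_self]
  exact sub_eq_zero.mp (CStarRing.mul_star_self_eq_zero_iff d |>.mp (hd _))

theorem coe_mul (a : A) (m : 𝓜(ℂ, A)) : (a : 𝓜(ℂ, A)) * m = ↑(m.snd a) := by
  ext x
  · simpa using (m.central a x).symm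
  · simpa using snd_apply_mul m x a

end DoubleCentralizer

section

open DoubleCentralizer

variable {A B C : Type*} [NonUnitalCStarAlgebra A] [NonUnitalCStarAlgebra B]
  [NonUnitalCStarAlgebra C]

theorem NonUnitalStarAlgHom.NondegenerateIntoMultiplier.apply_coe_mem_range_coe
    {ψ : B →⋆ₙₐ[ℂ] 𝓜(ℂ, A)} (hψ : ψ.NondegenerateIntoMultiplier) (Φ : 𝓜(ℂ, A) →⋆ₙₐ[ℂ] 𝓜(ℂ, C))
    (hΦψ : ∀ b, Φ (ψ b) ∈ Set.range ((↑) : C → 𝓜(ℂ, C))) (a : A) :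
    Φ a ∈ Set.range ((↑) : C → 𝓜(ℂ, C)) := by
  let V : Submodule ℂ 𝓜(ℂ, A) :=
    (LinearMap.range (coeHom (𝕜 := ℂ) (A := C) : C →ₗ[ℂ] 𝓜(ℂ, C))).comap
      (Φ : 𝓜(ℂ, A) →ₗ[ℂ] 𝓜(ℂ, C))
  have hV : IsClosed (V : Set 𝓜(ℂ, A)) := isClosed_range_coe.preimage (map_continuous Φ)
  have hgen : Submodule.span ℂ {x | ∃ (b : B) (a' : A), x = ψ b * (a' : 𝓜(ℂ, A))} ≤ V := by
    rw [Submodule.span_le]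
    rintro _ ⟨b, a', rfl⟩
    obtain ⟨c, hc⟩ := hΦψ b
    exact ⟨(Φ a').snd c, by simp [← coe_mul, hc]⟩
  have ha : (a : 𝓜(ℂ, A)) ∈ closure (Submodule.span ℂ
      {x | ∃ (b : B) (a' : A), x = ψ b * (a' : 𝓜(ℂ, A))} : Set 𝓜(ℂ, A)) := by
    rw [hψ]
    exact ⟨a, rfl⟩
  rw [← Submodule.topologicalClosure_coe] at ha
  exact Submodule.topologicalClosure_minimal _ hgen hV ha

theorem NonUnitalStarAlgHom.NondegenerateIntoMultiplier.apply_mem_range_coe_of_inverse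
    {φ : A →⋆ₙₐ[ℂ] 𝓜(ℂ, B)} {ψ : B →⋆ₙₐ[ℂ] 𝓜(ℂ, A)} (hψ : ψ.NondegenerateIntoMultiplier)
    {φbar : 𝓜(ℂ, A) →⋆ₙₐ[ℂ] 𝓜(ℂ, B)} (hφbar : ∀ a : A, φbar a = φ a)
    (hinv : ∀ b : B, φbar (ψ b) = b) (a : A) :
    φ a ∈ Set.range ((↑) : B → 𝓜(ℂ, B)) :=
  hφbar a ▸ hψ.apply_coe_mem_range_coe φbar (fun b => ⟨b, (hinv b).symm⟩) a

noncomputable def NonUnitalStarAlgHom.codRestrictCoe (φ : A →⋆ₙₐ[ℂ] 𝓜(ℂ, B))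
    (hφ : ∀ a, φ a ∈ Set.range ((↑) : B → 𝓜(ℂ, B))) : A →⋆ₙₐ[ℂ] B :=
  (StarAlgEquiv.ofInjective' (coeHom (𝕜 := ℂ) (A := B)) coe_injective).symm
    |>.toNonUnitalStarAlgHom.comp (NonUnitalStarAlgHom.codRestrict φ _ hφ)

@[simp]
theorem NonUnitalStarAlgHom.coe_codRestrictCoe_apply (φ : A →⋆ₙₐ[ℂ] 𝓜(ℂ, B))
    (hφ : ∀ a, φ a ∈ Set.range ((↑) : B → 𝓜(ℂ, B))) (a : A) :
    ((φ.codRestrictCoe hφ a : B) : 𝓜(ℂ, B)) = φ a :=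
  congrArg Subtype.val <| StarAlgEquiv.apply_symm_apply
    (StarAlgEquiv.ofInjective' (coeHom (𝕜 := ℂ) (A := B)) coe_injective) ⟨φ a, hφ a⟩

theorem NonUnitalStarAlgHom.codRestrictCoe_comp_codRestrictCoe {φ : A →⋆ₙₐ[ℂ] 𝓜(ℂ, B)}
    {ψ : B →⋆ₙₐ[ℂ] 𝓜(ℂ, A)} (hφ : ∀ a, φ a ∈ Set.range ((↑) : B → 𝓜(ℂ, B)))
    (hψ : ∀ b, ψ b ∈ Set.range ((↑) : A → 𝓜(ℂ, A)))
    {ψbar : 𝓜(ℂ, B) →⋆ₙₐ[ℂ] 𝓜(ℂ, A)} (hψbar : ∀ b : B, ψbar b = ψ b)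
    (hinv : ∀ a : A, ψbar (φ a) = a) :
    (ψ.codRestrictCoe hψ).comp (φ.codRestrictCoe hφ) = .id ℂ A :=
  NonUnitalStarAlgHom.ext fun a => coe_injective <| by
    simp [← hψbar, hinv]

end

/-- If `φ : A → M(B)` and `ψ : B → M(A)` are nondegenerate ⋆-homomorphisms which are
mutually inverse in the nondegenerate category (i.e. `ψ̄ ∘ φ = ι_A` and `φ̄ ∘ ψ = ι_B`
for extensions `φ̄`, `ψ̄` to the multiplier algebras), then `φ` has range exactly
`ι_B(B)`, and there is a ⋆-isomorphism `θ : A ≃ B` with `ι_B ∘ θ = φ` and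
`ι_A ∘ θ⁻¹ = ψ`. -/
theorem isomorphisms_in_nondegenerate_category_are_star_isomorphisms
    {A B : Type*} [NonUnitalCStarAlgebra A] [NonUnitalCStarAlgebra B]
    (φ : A →⋆ₙₐ[ℂ] 𝓜(ℂ, B)) (hφ : φ.NondegenerateIntoMultiplier)
    (ψ : B →⋆ₙₐ[ℂ] 𝓜(ℂ, A)) (hψ : ψ.NondegenerateIntoMultiplier)
    (φbar : 𝓜(ℂ, A) →⋆ₙₐ[ℂ] 𝓜(ℂ, B)) (hφbar : ∀ a : A, φbar (a : 𝓜(ℂ, A)) = φ a)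
    (ψbar : 𝓜(ℂ, B) →⋆ₙₐ[ℂ] 𝓜(ℂ, A)) (hψbar : ∀ b : B, ψbar (b : 𝓜(ℂ, B)) = ψ b)
    (hinv₁ : ∀ a : A, ψbar (φ a) = (a : 𝓜(ℂ, A)))
    (hinv₂ : ∀ b : B, φbar (ψ b) = (b : 𝓜(ℂ, B))) :
    Set.range φ = Set.range ((↑) : B → 𝓜(ℂ, B)) ∧
      ∃ θ : A ≃⋆ₐ[ℂ] B,
        (∀ a : A, ((θ a : B) : 𝓜(ℂ, B)) = φ a) ∧
        (∀ b : B, ((θ.symm b : A) : 𝓜(ℂ, A)) = ψ b) := by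
  have hφB := hψ.apply_mem_range_coe_of_inverse hφbar hinv₂
  have hψA := hφ.apply_mem_range_coe_of_inverse hψbar hinv₁
  have hgf := NonUnitalStarAlgHom.codRestrictCoe_comp_codRestrictCoe hφB hψA hψbar hinv₁
  have hfg := NonUnitalStarAlgHom.codRestrictCoe_comp_codRestrictCoe hψA hφB hφbar hinv₂
  refine ⟨(Set.range_subset_iff.2 hφB).antisymm ?_,
    StarAlgEquiv.ofNonUnitalStarAlgHom _ _ hgf hfg, φ.coe_codRestrictCoe_apply hφB,
    ψ.coe_codRestrictCoe_apply hψA⟩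
  rintro _ ⟨b, rfl⟩
  refine ⟨ψ.codRestrictCoe hψA b, ?_⟩
  rw [← φ.coe_codRestrictCoe_apply hφB, ← NonUnitalStarAlgHom.comp_apply, hfg]
  rfl
end

section
/- Let X and Y be locally compact Hausdorff spaces and let φ : C₀(Y) → C_b(X) be a nondegenerate ⋆-homomorphism. Then there exists a unique continuous map f : X → Y such that φ(a) = a ∘ f for all a ∈ C₀(Y). (The functor C₀ is full: every nondegenerate ⋆-homomorphism C₀(Y) → M(C₀(X)) ≅ C_b(X) is of the form C₀(f).) -/
/-!
Adjoining a unit to `φ` gives a unital homomorphism `C(Y⁺) → C_b(X)` on the one-point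
compactification `Y⁺`, `g ↦ g(∞) + φ (g - g(∞))`. Composing it with evaluation at `x` gives a
character of `C(Y⁺)`, i.e. evaluation at a point `f x ∈ Y⁺`, and `f` is continuous because the
Gelfand homeomorphism `Y⁺ ≃ₜ characterSpace C(Y⁺)` is. Nondegeneracy forbids `f x = ∞`, since
some `φ a` does not vanish at `x`, and Urysohn's lemma in `Y` gives uniqueness.
-/

open scoped ZeroAtInfty BoundedContinuousFunction

/-- A ⋆-homomorphism `φ : C₀(Y) → C_b(X) = M(C₀(X))` is *nondegenerate* if the closed
linear span of the products `φ a · b` (with `a ∈ C₀(Y)`, `b ∈ C₀(X)`), which all lie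
in `C₀(X)`, equals `C₀(X)`. -/
def NondegenerateC0 {X Y : Type*} [TopologicalSpace X] [TopologicalSpace Y]
    (φ : C₀(Y, ℂ) →⋆ₙₐ[ℂ] (X →ᵇ ℂ)) : Prop :=
  closure ((Submodule.span ℂ
      {h : C₀(X, ℂ) | ∃ (a : C₀(Y, ℂ)) (b : C₀(X, ℂ)), ∀ x, h x = φ a x * b x} :
        Submodule ℂ C₀(X, ℂ)) : Set C₀(X, ℂ)) = Set.univ

open Filter OnePoint WeakDual

section Compactification

variable {𝕜 Y : Type*} [TopologicalSpace 𝕜] [TopologicalSpace Y] [R1Space Y]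

namespace ZeroAtInftyContinuousMap

def extendByZero [Zero 𝕜] (a : C₀(Y, 𝕜)) : C(OnePoint Y, 𝕜) :=
  OnePoint.continuousMapMk a.toContinuousMap 0
    (coclosedCompact_eq_cocompact (X := Y) ▸ zero_at_infty a)

@[simp] lemma extendByZero_infty [Zero 𝕜] (a : C₀(Y, 𝕜)) : a.extendByZero ∞ = 0 := rfl

@[simp] lemma extendByZero_coe [Zero 𝕜] (a : C₀(Y, 𝕜)) (y : Y) : a.extendByZero y = a y := rfl

end ZeroAtInftyContinuousMap

variable [CommRing 𝕜] [IsTopologicalRing 𝕜]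

namespace ContinuousMap

def zeroAtInftyPart (g : C(OnePoint Y, 𝕜)) : C₀(Y, 𝕜) where
  toFun y := g y - g ∞
  continuous_toFun := (g.continuous.comp continuous_coe).sub continuous_const
  zero_at_infty' := by
    rw [← coclosedCompact_eq_cocompact, ← sub_self (g ∞)]
    exact ((g.continuous.tendsto ∞).comp tendsto_coe_infty).sub_const _

@[simp] lemma zeroAtInftyPart_apply (g : C(OnePoint Y, 𝕜)) (y : Y) :
    g.zeroAtInftyPart y = g y - g ∞ := rfl

@[simp] lemma zeroAtInftyPart_extendByZero (a : C₀(Y, 𝕜)) :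
    a.extendByZero.zeroAtInftyPart = a := by
  ext y; simp

def toUnitization : C(OnePoint Y, 𝕜) →ₐ[𝕜] Unitization 𝕜 C₀(Y, 𝕜) :=
  AlgHom.ofLinearMap
    { toFun g := Unitization.inl (g ∞) + Unitization.inr g.zeroAtInftyPart
      map_add' g h := by ext <;> simp; ring
      map_smul' c g := by ext <;> simp; ring }
    (by ext <;> simp)
    (fun g h => by ext <;> simp; ring)

@[simp] lemma toUnitization_extendByZero (a : C₀(Y, 𝕜)) :
    toUnitization a.extendByZero = Unitization.inr a := by
  ext <;> simp [toUnitization]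

end ContinuousMap

end Compactification

theorem AlgHom.exists_continuousMap_apply_eq_comp {𝕜 K X : Type*} [RCLike 𝕜] [TopologicalSpace K]
    [CompactSpace K] [T2Space K] [TopologicalSpace X] (Φ : C(K, 𝕜) →ₐ[𝕜] C(X, 𝕜)) :
    ∃ f : C(X, K), ∀ g x, Φ g x = g (f x) := by
  let χ : X → characterSpace 𝕜 C(K, 𝕜) := fun x => CharacterSpace.equivAlgHom.symm
    ((Pi.evalAlgHom 𝕜 (fun _ => 𝕜) x).comp ((ContinuousMap.coeFnAlgHom 𝕜).comp Φ))
  have hχ : Continuous χ :=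
    (continuous_of_continuous_eval fun g => (Φ g).continuous).subtype_mk _
  let e := CharacterSpace.homeoEval K 𝕜
  exact ⟨⟨e.symm ∘ χ, e.symm.continuous.comp hχ⟩, fun g x =>
    congr($(e.apply_symm_apply (χ x)).1 g).symm⟩

theorem ZeroAtInftyContinuousMap.exists_eq_one_eqOn_zero {𝕜 Y : Type*} [RCLike 𝕜]
    [TopologicalSpace Y] [LocallyCompactSpace Y] [R1Space Y] {y : Y} {t : Set Y}
    (ht : IsClosed t) (hy : y ∉ t) : ∃ a : C₀(Y, 𝕜), a y = 1 ∧ Set.EqOn a 0 t := by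
  obtain ⟨f, hf1, hf0, hfc, -⟩ := exists_continuous_one_zero_of_isCompact isCompact_singleton ht
    (Set.disjoint_singleton_left.mpr hy)
  refine ⟨⟨(⟨RCLike.ofReal, RCLike.continuous_ofReal⟩ : C(ℝ, 𝕜)).comp f,
    (hfc.comp_left RCLike.ofReal_zero).is_zero_at_infty⟩, ?_, fun z hz => ?_⟩
  · change ((f y : ℝ) : 𝕜) = 1
    simp [hf1 rfl]
  · change ((f z : ℝ) : 𝕜) = 0
    simp [hf0 hz]

theorem ContinuousMap.exists_coe_apply_eq_of_forall_ne_infty {X Y : Type*} [TopologicalSpace X]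
    [TopologicalSpace Y] (F : C(X, OnePoint Y)) (hF : ∀ x, F x ≠ ∞) :
    ∃ f : C(X, Y), ∀ x, (f x : OnePoint Y) = F x := by
  choose f hf using fun x => ne_infty_iff_exists.mp (hF x)
  refine ⟨⟨f, isOpenEmbedding_coe.isEmbedding.continuous_iff.mpr ?_⟩, hf⟩
  simpa only [Function.comp_def, hf] using F.continuous

theorem NondegenerateC0.exists_apply_ne_zero {X Y : Type*} [TopologicalSpace X]
    [LocallyCompactSpace X] [R1Space X] [TopologicalSpace Y] {φ : C₀(Y, ℂ) →⋆ₙₐ[ℂ] (X →ᵇ ℂ)}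
    (hφ : NondegenerateC0 φ) (x : X) : ∃ a, φ a x ≠ 0 := by
  by_contra! h
  let Z : Submodule ℂ C₀(X, ℂ) :=
    LinearMap.ker ({ toFun g := g x, map_add' _ _ := rfl, map_smul' _ _ := rfl } :
      C₀(X, ℂ) →ₗ[ℂ] ℂ)
  have hZ : IsClosed (Z : Set C₀(X, ℂ)) := isClosed_eq
    ((continuous_eval_const x).comp ZeroAtInftyContinuousMap.isometry_toBCF.continuous)
    continuous_const
  have hspan : Submodule.span ℂ
      {g : C₀(X, ℂ) | ∃ (a : C₀(Y, ℂ)) (b : C₀(X, ℂ)), ∀ x, g x = φ a x * b x} ≤ Z :=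
    Submodule.span_le.mpr fun g ⟨a, b, hg⟩ => by simp [Z, hg, h]
  obtain ⟨c, hc, -⟩ := ZeroAtInftyContinuousMap.exists_eq_one_eqOn_zero (𝕜 := ℂ)
    isClosed_empty (Set.notMem_empty x)
  have : c ∈ Z := (hZ.closure_subset_iff.mpr hspan) (hφ ▸ Set.mem_univ c)
  simp [Z, hc] at this

/-- The functor `C₀` is full: every nondegenerate ⋆-homomorphism
`φ : C₀(Y) → C_b(X) = M(C₀(X))` is of the form `C₀(f) : a ↦ a ∘ f` for a unique
continuous map `f : X → Y`. -/
theorem c0_functor_full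
    {X Y : Type*} [TopologicalSpace X] [LocallyCompactSpace X] [T2Space X]
    [TopologicalSpace Y] [LocallyCompactSpace Y] [T2Space Y]
    (φ : C₀(Y, ℂ) →⋆ₙₐ[ℂ] (X →ᵇ ℂ)) (hφ : NondegenerateC0 φ) :
    ∃! f : C(X, Y), ∀ (a : C₀(Y, ℂ)) (x : X), φ a x = a (f x) := by
  obtain ⟨F, hF⟩ := (BoundedContinuousFunction.toContinuousMapₐ ℂ |>.comp <|
    (Unitization.lift φ.toNonUnitalAlgHom).comp ContinuousMap.toUnitization)
    |>.exists_continuousMap_apply_eq_comp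
  have hφF (a : C₀(Y, ℂ)) (x : X) : φ a x = a.extendByZero (F x) := by
    simpa using hF a.extendByZero x
  have hF_ne (x : X) : F x ≠ ∞ := fun hx => by
    obtain ⟨a, ha⟩ := hφ.exists_apply_ne_zero x
    simp [hφF, hx] at ha
  obtain ⟨f, hf⟩ := F.exists_coe_apply_eq_of_forall_ne_infty hF_ne
  have hφf (a : C₀(Y, ℂ)) (x : X) : φ a x = a (f x) := by simpa [← hf] using hφF a x
  refine ⟨f, hφf, fun g hg => ?_⟩
  ext x
  by_contra hne
  obtain ⟨a, ha1, ha0⟩ := ZeroAtInftyContinuousMap.exists_eq_one_eqOn_zero (𝕜 := ℂ)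
    isClosed_singleton hne
  simpa [ha1, ha0 rfl] using (hφf a x).symm.trans (hg a x)
end
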